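/- In T(HV₁), for i ∈ {2,3} the element p_i := u_{i1} − ω u_{1,5−i} satisfies Δ(p_i) = p_i ⊗ 1 + 1 ⊗ p_i + (x₁x_{5−i} + x_i x₁ + x_{5−i}x_i) ⊗ x₄. In particular p_i becomes primitive in any quotient braided Hopf algebra in which x₁x_{5−i} + x_i x₁ + x_{5−i}x_i = 0. -/

import Mathlib

/-!
Write `l a = a ⊗ 1` and `r a = 1 ⊗ a`. For primitive `a, b` braiding as `q, q'` past each other, the
`q`-commutator `ab − q ba` has coproduct with the single extra term `(1 − qq') a ⊗ b`; this gives
`Δ(z_j)`. In `Δ(u_{ij})` the term `r(x_i) l(z_j) = −q₁ l(z_{2i−j}) r(x_i)` cancels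
`q₁ z_{2i−j} ⊗ x_i`, which yields the formula for `Δ(u_{ij})` of the paper. Since `2i − 1 = 5 − i` and
`2 − (5 − i) = i` in `ℤ/3`, the `x ⊗ z` terms of `u_{i1}` and `ω u_{1,5−i}` cancel once `ω³ = 1`, and
the `⊗ x₄` terms add up to `s_i` because `1 + ω + ω² = 0`.
-/
open FreeAlgebra

/-- `z_h = x_h x₄ − q₁ x₄ x_h` in the tensor algebra `T(HV₁)`, realized as the
free algebra on generators `x_i = ι (some i)` (`i : ZMod 3`) and `x₄ = ι none`. -/
def zT (k : Type*) [Field k] (q1 : k) (h : ZMod 3) :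
    FreeAlgebra k (Option (ZMod 3)) :=
  ι k (some h) * ι k none - q1 • (ι k (none : Option (ZMod 3)) * ι k (some h))

/-- `u_{ij} = x_i z_j + q₁ z_{2i−j} x_i` in `T(HV₁)`. -/
def uT (k : Type*) [Field k] (q1 : k) (i j : ZMod 3) :
    FreeAlgebra k (Option (ZMod 3)) :=
  ι k (some i) * zT k q1 j + q1 • (zT k q1 (2 * i - j) * ι k (some i))

/-- `p_i = u_{i1} − ω u_{1,5−i}` in `T(HV₁)`. -/
def pT (k : Type*) [Field k] (ω q1 : k) (i : ZMod 3) :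
    FreeAlgebra k (Option (ZMod 3)) :=
  uT k q1 i 1 - ω • uT k q1 1 (5 - i)

/-- `x₁x_{5−i} + x_i x₁ + x_{5−i} x_i` in `T(HV₁)`. -/
def sT (k : Type*) [Field k] (i : ZMod 3) : FreeAlgebra k (Option (ZMod 3)) :=
  ι k (some 1) * ι k (some (5 - i)) + ι k (some i) * ι k (some 1)
    + ι k (some (5 - i)) * ι k (some i)

section QCommutator

variable {k A B : Type*} [CommRing k] [Ring A] [Algebra k A] [Ring B] [Algebra k B]

theorem map_qcomm_of_primitive (l r Δ : A →ₐ[k] B) {a b : A} {q q' : k}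
    (ha : Δ a = l a + r a) (hb : Δ b = l b + r b)
    (hab : r a * l b = q • (l b * r a)) (hba : r b * l a = q' • (l a * r b)) :
    Δ (a * b - q • (b * a)) = l (a * b - q • (b * a)) + r (a * b - q • (b * a))
      + (1 - q * q') • (l a * r b) := by
  simp only [map_sub, map_mul, map_smul, ha, hb, add_mul, mul_add, hab, hba]
  module

end QCommutator

section Braiding

variable {k : Type*} [Field k] {q1 q2 : k} {B : Type*} [Ring B] [Algebra k B]
  (l r Δ : FreeAlgebra k (Option (ZMod 3)) →ₐ[k] B)

theorem map_zT
    (hc2 : ∀ i : ZMod 3, r (ι k (some i)) * l (ι k none) = q1 • (l (ι k none) * r (ι k (some i))))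
    (hc3 : ∀ i : ZMod 3, r (ι k none) * l (ι k (some i)) = q2 • (l (ι k (some i)) * r (ι k none)))
    (hΔ : ∀ i, Δ (ι k i) = l (ι k i) + r (ι k i)) (j : ZMod 3) :
    Δ (zT k q1 j) = l (zT k q1 j) + r (zT k q1 j)
      + (1 - q1 * q2) • (l (ι k (some j)) * r (ι k none)) :=
  map_qcomm_of_primitive l r Δ (hΔ _) (hΔ _) (hc2 j) (hc3 j)

theorem map_uT
    (hc1 : ∀ i j : ZMod 3, r (ι k (some i)) * l (ι k (some j))
      = -(l (ι k (some (2 * i - j))) * r (ι k (some i))))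
    (hc2 : ∀ i : ZMod 3, r (ι k (some i)) * l (ι k none) = q1 • (l (ι k none) * r (ι k (some i))))
    (hc3 : ∀ i : ZMod 3, r (ι k none) * l (ι k (some i)) = q2 • (l (ι k (some i)) * r (ι k none)))
    (hΔ : ∀ i, Δ (ι k i) = l (ι k i) + r (ι k i)) (i j : ZMod 3) :
    Δ (uT k q1 i j) = l (uT k q1 i j) + r (uT k q1 i j)
      + l (ι k (some i)) * r (zT k q1 j)
      - (q1 * q2) • (l (ι k (some j)) * r (zT k q1 (2 * i - j)))
      - (1 - q1 * q2) • (l (ι k (some (2 * i - j))) * r (zT k q1 i))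
      + (1 - q1 * q2) • (l (ι k (some i) * ι k (some j)
          + (q1 * q2) • (ι k (some (2 * i - j)) * ι k (some i))) * r (ι k none)) := by
  have assoc {a b c : B} (h : a * b = c) (x : B) : a * (b * x) = c * x := by rw [← mul_assoc, h]
  rw [uT, map_add, map_mul, map_smul, map_mul, hΔ, map_zT l r Δ hc2 hc3 hΔ,
    map_zT l r Δ hc2 hc3 hΔ]
  obtain ⟨m, hm, hj⟩ : ∃ m, 2 * i - j = m ∧ 2 * m - i = j := ⟨_, rfl, by revert i j; decide⟩
  simp only [zT, map_add, map_sub, map_mul, map_smul, mul_add, add_mul, mul_sub, sub_mul,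
    smul_add, smul_sub, smul_mul_assoc, mul_smul_comm, smul_smul, mul_assoc, neg_mul, mul_neg,
    smul_neg, hc1, hc2, hc3, assoc (hc1 _ _), assoc (hc2 _), assoc (hc3 _), hm, hj]
  match_scalars <;> ring

theorem map_pT {ω : k} (hω : ω ^ 3 = 1) (hω1 : ω ≠ 1) (hq : q1 * q2 = -ω)
    (hc1 : ∀ i j : ZMod 3, r (ι k (some i)) * l (ι k (some j))
      = -(l (ι k (some (2 * i - j))) * r (ι k (some i))))
    (hc2 : ∀ i : ZMod 3, r (ι k (some i)) * l (ι k none) = q1 • (l (ι k none) * r (ι k (some i))))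
    (hc3 : ∀ i : ZMod 3, r (ι k none) * l (ι k (some i)) = q2 • (l (ι k (some i)) * r (ι k none)))
    (hΔ : ∀ i, Δ (ι k i) = l (ι k i) + r (ι k i)) (i : ZMod 3) :
    Δ (pT k ω q1 i) = l (pT k ω q1 i) + r (pT k ω q1 i) + l (sT k i) * r (ι k none) := by
  have hsum : ω ^ 2 + ω + 1 = 0 :=
    mul_left_cancel₀ (sub_ne_zero.mpr hω1) (by linear_combination hω)
  have h1 : 2 * i - 1 = 5 - i := by revert i; decide
  have h2 : 2 * 1 - (5 - i) = i := by revert i; decide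
  rw [pT, map_sub, map_smul, map_uT l r Δ hc1 hc2 hc3 hΔ, map_uT l r Δ hc1 hc2 hc3 hΔ, h1, h2, hq]
  simp only [sT, map_sub, map_smul, map_add, add_mul, smul_mul_assoc, smul_add, smul_sub]
  match_scalars <;> grind

end Braiding

theorem pi_coproduct_general {k : Type*} [Field k] (ω q1 q2 : k)
    (hω : ω ^ 3 = 1) (hω1 : ω ≠ 1) (hq : q1 * q2 = -ω)
    {B : Type*} [Ring B] [Algebra k B]
    (l r : FreeAlgebra k (Option (ZMod 3)) →ₐ[k] B)
    (hc1 : ∀ i j : ZMod 3, r (ι k (some i)) * l (ι k (some j))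
        = -(l (ι k (some (2 * i - j))) * r (ι k (some i))))
    (hc2 : ∀ i : ZMod 3, r (ι k (some i)) * l (ι k (none : Option (ZMod 3)))
        = q1 • (l (ι k (none : Option (ZMod 3))) * r (ι k (some i))))
    (hc3 : ∀ i : ZMod 3, r (ι k (none : Option (ZMod 3))) * l (ι k (some i))
        = q2 • (l (ι k (some i)) * r (ι k (none : Option (ZMod 3)))))
    (Δ : FreeAlgebra k (Option (ZMod 3)) →ₐ[k] B)
    (hΔ : ∀ i : Option (ZMod 3), Δ (ι k i) = l (ι k i) + r (ι k i)) :
    ∀ i : ZMod 3, i ≠ 1 →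
      (Δ (pT k ω q1 i) = l (pT k ω q1 i) + r (pT k ω q1 i)
          + l (sT k i) * r (ι k (none : Option (ZMod 3)))) ∧
      (l (sT k i) = 0 → Δ (pT k ω q1 i) = l (pT k ω q1 i) + r (pT k ω q1 i)) := by
  intro i _
  have hp := map_pT l r Δ hω hω1 hq hc1 hc2 hc3 hΔ i
  exact ⟨hp, fun hs => by rw [hp, hs, zero_mul, add_zero]⟩

/-- in `T(HV₁)`, for `i ∈ {2,3}` the element
`p_i = u_{i1} − ω u_{1,5−i}` satisfies
`Δ(p_i) = p_i ⊗ 1 + 1 ⊗ p_i + (x₁x_{5−i} + x_i x₁ + x_{5−i}x_i) ⊗ x₄`;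
in particular `p_i` becomes primitive whenever
`x₁x_{5−i} + x_i x₁ + x_{5−i}x_i = 0`.  The braided tensor square is modelled
as in Statement 17. -/
theorem pi_coproduct {k : Type*} [Field k] (ω q1 q2 : k)
    (hω : ω ^ 3 = 1) (hω1 : ω ≠ 1) (hq : q1 * q2 = -ω)
    {B : Type*} [Ring B] [Algebra k B]
    (l r : FreeAlgebra k (Option (ZMod 3)) →ₐ[k] B)
    (hc1 : ∀ i j : ZMod 3, r (ι k (some i)) * l (ι k (some j))
        = -(l (ι k (some (2 * i - j))) * r (ι k (some i))))
    (hc2 : ∀ i : ZMod 3, r (ι k (some i)) * l (ι k (none : Option (ZMod 3)))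
        = q1 • (l (ι k (none : Option (ZMod 3))) * r (ι k (some i))))
    (hc3 : ∀ i : ZMod 3, r (ι k (none : Option (ZMod 3))) * l (ι k (some i))
        = q2 • (l (ι k (some i)) * r (ι k (none : Option (ZMod 3)))))
    (hc4 : r (ι k (none : Option (ZMod 3))) * l (ι k (none : Option (ZMod 3)))
        = (-ω ^ 2) • (l (ι k (none : Option (ZMod 3))) * r (ι k (none : Option (ZMod 3)))))
    (Δ : FreeAlgebra k (Option (ZMod 3)) →ₐ[k] B)
    (hΔ : ∀ i : Option (ZMod 3), Δ (ι k i) = l (ι k i) + r (ι k i)) :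
    ∀ i : ZMod 3, i ≠ 1 →
      (Δ (pT k ω q1 i) = l (pT k ω q1 i) + r (pT k ω q1 i)
          + l (sT k i) * r (ι k (none : Option (ZMod 3)))) ∧
      (l (sT k i) = 0 → Δ (pT k ω q1 i) = l (pT k ω q1 i) + r (pT k ω q1 i)) :=
  pi_coproduct_general ω q1 q2 hω hω1 hq l r hc1 hc2 hc3 Δ hΔ
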